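/- If f : [0,∞) → [a,b] (0 < a ≤ b) is continuous, s ↦ s f(s) is strictly increasing, and σ(τ) = f(‖τ‖)τ on M = ℝ^{d×d}_sym, then σ is strictly monotone: (σ(τ) − σ(η)) : (τ − η) > 0 whenever τ ≠ η. -/

import Mathlib

/-- Frobenius inner product of two matrices. -/
def frob {d : ℕ} (A B : Matrix (Fin d) (Fin d) ℝ) : ℝ :=
  ∑ i : Fin d, ∑ j : Fin d, A i j * B i j

/-- Frobenius norm of a matrix. -/
noncomputable def frobNorm {d : ℕ} (A : Matrix (Fin d) (Fin d) ℝ) : ℝ :=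
  Real.sqrt (frob A A)

/-!
The argument works in any real inner product space. With `s = ‖x‖`, `t = ‖y‖` and
`φ s = s g(s)`,
`⟪g s • x - g t • y, x - y⟫ = (φ s - φ t)(s - t) + (g s + g t)(s t - ⟪x, y⟫)`.
The first term is positive unless `s = t`, as `φ` is strictly increasing. The second is
nonnegative by Cauchy–Schwarz: it vanishes if `x` or `y` is zero, and otherwise `g s, g t > 0`
because `φ > φ 0 = 0` on `(0, ∞)`. If `s = t` and `x ≠ y`, then
`‖x - y‖² = 2 (s² - ⟪x, y⟫) > 0`, so the second term is positive.
The Frobenius product is the Euclidean inner product of the flattened matrices.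
-/

open RealInnerProductSpace

theorem StrictMonoOn.sub_mul_sub_pos {α : Type*} [CommRing α] [LinearOrder α]
    [IsStrictOrderedRing α] {φ : α → α} {S : Set α} (hφ : StrictMonoOn φ S) {s t : α}
    (hs : s ∈ S) (ht : t ∈ S) (hst : s ≠ t) : 0 < (φ s - φ t) * (s - t) := by
  rcases hst.lt_or_gt with h | h
  · exact mul_pos_of_neg_of_neg (sub_neg.2 (hφ hs ht h)) (sub_neg.2 h)
  · exact mul_pos (sub_pos.2 (hφ ht hs h)) (sub_pos.2 h)

theorem pos_of_strictMonoOn_id_mul {g : ℝ → ℝ} (hg : StrictMonoOn (fun s ↦ s * g s) (Set.Ici 0))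
    {s : ℝ} (hs : 0 < s) : 0 < g s := by
  have h : 0 * g 0 < s * g s := hg Set.self_mem_Ici hs.le hs
  rw [zero_mul] at h
  exact pos_of_mul_pos_right h hs.le

section InnerProductSpace

variable {E : Type*} [NormedAddCommGroup E] [InnerProductSpace ℝ E]

theorem real_inner_smul_sub_smul_sub_eq (a b : ℝ) (x y : E) :
    ⟪a • x - b • y, x - y⟫ =
      (‖x‖ * a - ‖y‖ * b) * (‖x‖ - ‖y‖) + (a + b) * (‖x‖ * ‖y‖ - ⟪x, y⟫) := by
  simp only [inner_sub_left, inner_sub_right, real_inner_smul_left, real_inner_self_eq_norm_sq,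
    real_inner_comm x y]
  ring

theorem add_mul_norm_mul_norm_sub_inner_nonneg {g : ℝ → ℝ} (hg : ∀ s, 0 < s → 0 < g s)
    (x y : E) : 0 ≤ (g ‖x‖ + g ‖y‖) * (‖x‖ * ‖y‖ - ⟪x, y⟫) := by
  rcases eq_or_ne x 0 with rfl | hx
  · simp
  rcases eq_or_ne y 0 with rfl | hy
  · simp
  exact mul_nonneg (add_pos (hg _ (norm_pos_iff.2 hx)) (hg _ (norm_pos_iff.2 hy))).le
    (sub_nonneg.2 (real_inner_le_norm x y))

theorem real_inner_smul_norm_sub_smul_norm_pos {g : ℝ → ℝ}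
    (hg : StrictMonoOn (fun s ↦ s * g s) (Set.Ici 0)) {x y : E} (hxy : x ≠ y) :
    0 < ⟪g ‖x‖ • x - g ‖y‖ • y, x - y⟫ := by
  have hg_pos : ∀ s, 0 < s → 0 < g s := fun _ ↦ pos_of_strictMonoOn_id_mul hg
  rw [real_inner_smul_sub_smul_sub_eq]
  by_cases hnorm : ‖x‖ = ‖y‖
  · have hgap : 0 < ‖x‖ * ‖x‖ - ⟪x, y⟫ := by
      have h := norm_sub_sq_real x y
      rw [← hnorm] at h
      nlinarith [pow_pos (norm_sub_pos_iff.2 hxy) 2]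
    have hx : 0 < ‖x‖ := norm_pos_iff.2 (by rintro rfl; simp at hgap)
    rw [← hnorm, sub_self, zero_mul, zero_add]
    exact mul_pos (add_pos (hg_pos _ hx) (hg_pos _ hx)) hgap
  · exact add_pos_of_pos_of_nonneg
      (hg.sub_mul_sub_pos (norm_nonneg x) (norm_nonneg y) hnorm)
      (add_mul_norm_mul_norm_sub_inner_nonneg hg_pos x y)

end InnerProductSpace

noncomputable def Matrix.toEuclideanSpace {m n : Type*} [Fintype m] [Fintype n] :
    Matrix m n ℝ →ₗ[ℝ] EuclideanSpace ℝ (m × n) where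
  toFun A := WithLp.toLp 2 fun p ↦ A p.1 p.2
  map_add' _ _ := rfl
  map_smul' _ _ := rfl

theorem Matrix.toEuclideanSpace_apply {m n : Type*} [Fintype m] [Fintype n] (A : Matrix m n ℝ)
    (p : m × n) : A.toEuclideanSpace p = A p.1 p.2 :=
  rfl

theorem Matrix.toEuclideanSpace_injective {m n : Type*} [Fintype m] [Fintype n] :
    Function.Injective (Matrix.toEuclideanSpace : Matrix m n ℝ → _) := fun _ _ h ↦
  Matrix.ext fun i j ↦ congrArg (· (i, j)) h

theorem frob_eq_inner {d : ℕ} (A B : Matrix (Fin d) (Fin d) ℝ) :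
    frob A B = ⟪A.toEuclideanSpace, B.toEuclideanSpace⟫ := by
  simp [frob, PiLp.inner_apply, Fintype.sum_prod_type, Matrix.toEuclideanSpace_apply, mul_comm]

theorem frobNorm_eq_norm {d : ℕ} (A : Matrix (Fin d) (Fin d) ℝ) :
    frobNorm A = ‖A.toEuclideanSpace‖ := by
  rw [frobNorm, frob_eq_inner, real_inner_self_eq_norm_sq, Real.sqrt_sq (norm_nonneg _)]

theorem damage_law_strictly_monotone_general
    {d : ℕ}
    (f : ℝ → ℝ)
    (hmono : ∀ s t : ℝ, 0 ≤ s → s < t → s * f s < t * f t)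
    (σ : Matrix (Fin d) (Fin d) ℝ → Matrix (Fin d) (Fin d) ℝ)
    (hσ : ∀ τ : Matrix (Fin d) (Fin d) ℝ, σ τ = f (frobNorm τ) • τ) :
    ∀ τ η : Matrix (Fin d) (Fin d) ℝ, τ.IsSymm → η.IsSymm → τ ≠ η →
      0 < frob (σ τ - σ η) (τ - η) := by
  intro τ η _ _ hne
  rw [frob_eq_inner, hσ, hσ, frobNorm_eq_norm, frobNorm_eq_norm, map_sub, map_sub, map_smul,
    map_smul]
  exact real_inner_smul_norm_sub_smul_norm_pos (fun s hs t _ hst ↦ hmono s t hs hst)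
    (Matrix.toEuclideanSpace_injective.ne hne)

/-- If `f : [0,∞) → [a,b]` (`0 < a ≤ b`) is continuous and `s ↦ s f(s)` strictly
increasing, then `σ(τ) = f(‖τ‖) τ` is strictly monotone on symmetric matrices. -/
theorem damage_law_strictly_monotone
    {d : ℕ} (a b : ℝ) (ha : 0 < a) (hab : a ≤ b)
    (f : ℝ → ℝ) (hcont : ContinuousOn f (Set.Ici (0 : ℝ)))
    (hrange : ∀ s : ℝ, 0 ≤ s → a ≤ f s ∧ f s ≤ b)
    (hmono : ∀ s t : ℝ, 0 ≤ s → s < t → s * f s < t * f t)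
    (σ : Matrix (Fin d) (Fin d) ℝ → Matrix (Fin d) (Fin d) ℝ)
    (hσ : ∀ τ : Matrix (Fin d) (Fin d) ℝ, σ τ = f (frobNorm τ) • τ) :
    ∀ τ η : Matrix (Fin d) (Fin d) ℝ, τ.IsSymm → η.IsSymm → τ ≠ η →
      0 < frob (σ τ - σ η) (τ - η) :=
  damage_law_strictly_monotone_general f hmono σ hσ
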